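/- arXiv:1511.00191 — 4 statements merged into one kernel-verified Lean document; each statement's English description precedes it below -/
import Mathlib

section
/- Quantitative Bihari-type estimate: Under the hypotheses of the Bihari-type lemma (f continuous with f(t) ≤ a + b t^α ∫_0^t (t−s)^{−α} s^{−α} ϱ(f(s)) ds, ϱ concave increasing vanishing only at 0), for any 1 < p < 2 with α < 1/p and conjugate q, one has f(t) ≤ [F^{−1}(F(2^{q−1} a^q) + 2^{q−1} b^q C_{α,p}^{q/p} t^{q((1/p)−α)+1})]^{1/q} for all t ∈ [0,T] for which the argument lies in the domain of F^{−1}, where F(x) = ∫_1^x du/ϱ(u^{1/q})^q and C_{α,p} = B(1−pα, 1−pα). -/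
/-!
Fix `ε > 0` and put `u = (f + ε) ^ q`, `W(u) = ϱ(u ^ (1/q)) ^ q`, `γ = q (1/p - α)`.
Hölder's inequality against the kernel `(t - s) ^ (-α) s ^ (-α)`, whose `p`-th power integrates
to `t ^ (1 - 2pα) B(1 - pα, 1 - pα)`, followed by `(x + y) ^ q ≤ 2 ^ (q - 1) (x ^ q + y ^ q)`,
gives `u(t) ≤ A_ε + B t ^ γ ∫₀ᵗ W(u)`. Along the right-hand side `v` of this inequality,
`v' ≤ B (γ + 1) t ^ γ W(v)` because `W` is monotone, so `F(v(t)) - B t ^ (γ + 1)` decreases and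
`F(u(t)) ≤ F(A_ε) + B t ^ (γ + 1)`. Let `ε → 0` (`F` is upper semicontinuous from the right
at `A ≥ 0`) and invert the strictly increasing `F`.
-/

open MeasureTheory Set Filter Topology

lemma UpperSemicontinuousWithinAt.le_of_tendsto {X ι β : Type*} [TopologicalSpace X]
    [LinearOrder β] {F : X → β} {s : Set X} {x : X} {y : β} {l : Filter ι} [l.NeBot]
    {g : ι → X} (hF : UpperSemicontinuousWithinAt F s x) (hg : Tendsto g l (𝓝[s] x))
    (h : ∀ᶠ i in l, y ≤ F (g i)) : y ≤ F x := by
  by_contra! hlt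
  obtain ⟨i, hi, hi'⟩ := ((hg.eventually (hF y hlt)).and h).exists
  exact hi.not_ge hi'

lemma Real.rpow_add_le_mul_rpow_add_rpow {x y p : ℝ} (hx : 0 ≤ x) (hy : 0 ≤ y)
    (hp : 1 ≤ p) : (x + y) ^ p ≤ 2 ^ (p - 1) * (x ^ p + y ^ p) := by
  lift x to NNReal using hx
  lift y to NNReal using hy
  exact_mod_cast NNReal.rpow_add_le_mul_rpow_add_rpow x y hp

lemma memLp_ofReal_of_integrable_rpow {α : Type*} [MeasurableSpace α] {μ : Measure α}
    {f : α → ℝ} {p : ℝ} (hp : 0 < p) (hf : AEStronglyMeasurable f μ) (hf0 : 0 ≤ᵐ[μ] f)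
    (hfp : Integrable (fun x => f x ^ p) μ) : MemLp f (ENNReal.ofReal p) μ := by
  rw [← integrable_norm_rpow_iff hf (by simpa using hp) ENNReal.ofReal_ne_top,
    ENNReal.toReal_ofReal hp.le]
  refine hfp.congr ?_
  filter_upwards [hf0] with x hx
  rw [Real.norm_of_nonneg hx]

lemma intervalIntegral.integral_mul_le_Lp_mul_Lq_of_nonneg {p q a b : ℝ} (hab : a ≤ b)
    (hpq : p.HolderConjugate q) {f g : ℝ → ℝ}
    (hf : AEStronglyMeasurable f (volume.restrict (Ioc a b)))
    (hg : AEStronglyMeasurable g (volume.restrict (Ioc a b)))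
    (hf0 : ∀ x ∈ Ioc a b, 0 ≤ f x) (hg0 : ∀ x ∈ Ioc a b, 0 ≤ g x)
    (hfp : IntervalIntegrable (fun x => f x ^ p) volume a b)
    (hgq : IntervalIntegrable (fun x => g x ^ q) volume a b) :
    ∫ x in a..b, f x * g x
      ≤ (∫ x in a..b, f x ^ p) ^ (1 / p) * (∫ x in a..b, g x ^ q) ^ (1 / q) := by
  rw [intervalIntegrable_iff_integrableOn_Ioc_of_le hab] at hfp hgq
  have hf0' := ae_restrict_of_forall_mem (μ := volume) measurableSet_Ioc hf0
  have hg0' := ae_restrict_of_forall_mem (μ := volume) measurableSet_Ioc hg0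
  simp only [intervalIntegral.integral_of_le hab]
  exact MeasureTheory.integral_mul_le_Lp_mul_Lq_of_nonneg hpq hf0' hg0'
    (memLp_ofReal_of_integrable_rpow hpq.pos hf hf0' hfp)
    (memLp_ofReal_of_integrable_rpow hpq.symm.pos hg hg0' hgq)

lemma monotoneOn_primitive_of_nonneg {φ : ℝ → ℝ} {T : ℝ} (hφ : ContinuousOn φ (Icc 0 T))
    (hφ0 : ∀ s ∈ Icc 0 T, 0 ≤ φ s) :
    MonotoneOn (fun r => ∫ s in (0:ℝ)..r, φ s) (Icc 0 T) := fun _ hr₁ _ hr₂ h =>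
  intervalIntegral.integral_mono_interval le_rfl hr₁.1 h
    (ae_restrict_of_forall_mem measurableSet_Ioc fun s hs =>
      hφ0 s ⟨hs.1.le, hs.2.trans hr₂.2⟩)
    ((hφ.mono (Icc_subset_Icc le_rfl hr₂.2)).intervalIntegrable_of_Icc hr₂.1)

lemma exists_hasDerivAt_rpow_mul_primitive_le {φ : ℝ → ℝ} {γ T r w : ℝ} (hγ : 0 ≤ γ)
    (hφ : ContinuousOn φ (Icc 0 T)) (hr : r ∈ Ioo 0 T) (hφw : ∀ s ∈ Icc 0 r, φ s ≤ w) :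
    ∃ d, HasDerivAt (fun r => r ^ γ * ∫ s in (0:ℝ)..r, φ s) d r ∧
      d ≤ (γ + 1) * r ^ γ * w := by
  have hφr : IntervalIntegrable φ volume 0 r :=
    (hφ.mono (Icc_subset_Icc le_rfl hr.2.le)).intervalIntegrable_of_Icc hr.1.le
  have hI : HasDerivAt (fun r => ∫ s in (0:ℝ)..r, φ s) (φ r) r :=
    intervalIntegral.integral_hasDerivAt_right hφr
      ((hφ.mono Ioo_subset_Icc_self).stronglyMeasurableAtFilter isOpen_Ioo r hr)
      (hφ.continuousAt (Icc_mem_nhds hr.1 hr.2))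
  refine ⟨_, (Real.hasDerivAt_rpow_const (Or.inl hr.1.ne')).mul hI, ?_⟩
  have hIw : ∫ s in (0:ℝ)..r, φ s ≤ r * w := by
    simpa using intervalIntegral.integral_mono_on (μ := volume) hr.1.le hφr
      intervalIntegrable_const hφw
  have hpow : r ^ (γ - 1) * r = r ^ γ := by rw [← Real.rpow_add_one hr.1.ne', sub_add_cancel]
  calc γ * r ^ (γ - 1) * (∫ s in (0:ℝ)..r, φ s) + r ^ γ * φ r
      ≤ γ * r ^ (γ - 1) * (r * w) + r ^ γ * w :=
        add_le_add (mul_le_mul_of_nonneg_left hIw (mul_nonneg hγ (Real.rpow_nonneg hr.1.le _)))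
          (mul_le_mul_of_nonneg_left (hφw r ⟨hr.1.le, le_rfl⟩) (Real.rpow_nonneg hr.1.le _))
    _ = (γ + 1) * r ^ γ * w := by rw [← hpow]; ring

noncomputable def bihariF (W : ℝ → ℝ) (y : ℝ) : ℝ := ∫ u in (1:ℝ)..y, 1 / W u

section BihariF

variable {W : ℝ → ℝ}

lemma hasDerivAt_bihariF (hWpos : ∀ y, 0 < y → 0 < W y) (hWcont : ContinuousOn W (Ioi 0))
    {y : ℝ} (hy : 0 < y) : HasDerivAt (bihariF W) (1 / W y) y := by
  have hcont : ContinuousOn (fun y => 1 / W y) (Ioi 0) :=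
    continuousOn_const.div hWcont fun y hy => (hWpos y hy).ne'
  exact intervalIntegral.integral_hasDerivAt_right
    ((hcont.mono fun _ hu => (lt_min one_pos hy).trans_le hu.1).intervalIntegrable)
    (hcont.stronglyMeasurableAtFilter isOpen_Ioi y hy) (hcont.continuousAt (Ioi_mem_nhds hy))

lemma continuousOn_bihariF (hWpos : ∀ y, 0 < y → 0 < W y) (hWcont : ContinuousOn W (Ioi 0)) :
    ContinuousOn (bihariF W) (Ioi 0) := fun _ hy =>
  (hasDerivAt_bihariF hWpos hWcont hy).continuousAt.continuousWithinAt

lemma strictMonoOn_bihariF (hWpos : ∀ y, 0 < y → 0 < W y) (hWcont : ContinuousOn W (Ioi 0)) :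
    StrictMonoOn (bihariF W) (Ioi 0) := by
  refine strictMonoOn_of_deriv_pos (convex_Ioi 0) (continuousOn_bihariF hWpos hWcont)
    fun y hy => ?_
  rw [interior_Ioi] at hy
  rw [(hasDerivAt_bihariF hWpos hWcont hy).deriv]
  exact one_div_pos.mpr (hWpos y hy)

/-- At `0`, where `1 / W` may fail to be integrable, `bihariF W 0` is either the limit of
`bihariF W` or the junk value `0`, which lies above all values of `bihariF W` on `(0, 1]`. -/
lemma upperSemicontinuousWithinAt_bihariF (hWpos : ∀ y, 0 < y → 0 < W y)
    (hWcont : ContinuousOn W (Ioi 0)) {A : ℝ} (hA : 0 ≤ A) :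
    UpperSemicontinuousWithinAt (bihariF W) (Ici 0) A := by
  rcases hA.eq_or_lt with rfl | hA
  · by_cases hint : IntervalIntegrable (fun u => 1 / W u) volume 0 1
    · have hcont := intervalIntegral.continuousOn_primitive_interval' hint
        (right_mem_uIcc (a := (0:ℝ)))
      rw [uIcc_of_le zero_le_one] at hcont
      exact ((hcont 0 (left_mem_Icc.mpr zero_le_one)).mono_of_mem_nhdsWithin
        (Icc_mem_nhdsGE one_pos)).upperSemicontinuousWithinAt
    · have hF0 : bihariF W 0 = 0 := by
        rw [bihariF, intervalIntegral.integral_symm, intervalIntegral.integral_undef hint,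
          neg_zero]
      have hF1 : bihariF W 1 = 0 := intervalIntegral.integral_same
      intro c hc
      filter_upwards [Icc_mem_nhdsGE one_pos] with y hy
      rcases hy.1.eq_or_lt with rfl | hy0
      · exact hc
      have := (strictMonoOn_bihariF hWpos hWcont).monotoneOn hy0 (mem_Ioi.mpr one_pos) hy.2
      linarith
  · exact ((continuousOn_bihariF hWpos hWcont).continuousAt
      (Ioi_mem_nhds hA)).continuousWithinAt.upperSemicontinuousWithinAt

lemma antitoneOn_bihariF_comp_sub (hWpos : ∀ y, 0 < y → 0 < W y)
    (hWcont : ContinuousOn W (Ioi 0)) {v c c' : ℝ → ℝ} {a b : ℝ}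
    (hv : ContinuousOn v (Icc a b)) (hvpos : ∀ r ∈ Icc a b, 0 < v r)
    (hc : ContinuousOn c (Icc a b)) (hc' : ∀ r ∈ Ioo a b, HasDerivAt c (c' r) r)
    (hv' : ∀ r ∈ Ioo a b, ∃ v', HasDerivAt v v' r ∧ v' ≤ c' r * W (v r)) :
    AntitoneOn (fun r => bihariF W (v r) - c r) (Icc a b) := by
  choose! v' hv' hv'_le using hv'
  have hderiv : ∀ r ∈ Ioo a b, HasDerivAt (fun r => bihariF W (v r) - c r)
      (1 / W (v r) * v' r - c' r) r := fun r hr =>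
    ((hasDerivAt_bihariF hWpos hWcont (hvpos r (Ioo_subset_Icc_self hr))).comp r
      (hv' r hr)).sub (hc' r hr)
  refine antitoneOn_of_deriv_nonpos (convex_Icc a b)
    (((continuousOn_bihariF hWpos hWcont).comp hv hvpos).sub hc) ?_ ?_ <;> rw [interior_Icc]
  · exact fun r hr => (hderiv r hr).differentiableAt.differentiableWithinAt
  · intro r hr
    rw [(hderiv r hr).deriv, sub_nonpos, one_div_mul_eq_div,
      div_le_iff₀ (hWpos _ (hvpos r (Ioo_subset_Icc_self hr)))]
    exact hv'_le r hr

end BihariF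

theorem bihariF_le_of_le_add_mul_integral {W : ℝ → ℝ} (hWpos : ∀ y, 0 < y → 0 < W y)
    (hWcont : ContinuousOn W (Ioi 0)) (hWmono : MonotoneOn W (Ioi 0)) {u : ℝ → ℝ}
    {A B γ T : ℝ} (hB : 0 ≤ B) (hγ : 0 ≤ γ) (hT : 0 ≤ T) (hu : ContinuousOn u (Icc 0 T))
    (hupos : ∀ t ∈ Icc 0 T, 0 < u t)
    (hle : ∀ t ∈ Icc 0 T, u t ≤ A + B * t ^ γ * ∫ s in (0:ℝ)..t, W (u s)) :
    bihariF W (u T) ≤ bihariF W A + B * T ^ (γ + 1) := by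
  set I : ℝ → ℝ := fun r => ∫ s in (0:ℝ)..r, W (u s)
  set v : ℝ → ℝ := fun r => A + B * (r ^ γ * I r)
  have hφ : ContinuousOn (fun s => W (u s)) (Icc 0 T) := hWcont.comp hu hupos
  have hI : ContinuousOn I (Icc 0 T) := by
    have := intervalIntegral.continuousOn_primitive_interval (μ := volume)
      (f := fun s => W (u s)) (a := 0) (b := T) (by rw [uIcc_of_le hT]; exact hφ.integrableOn_Icc)
    rwa [uIcc_of_le hT] at this
  have hI_mono : MonotoneOn I (Icc 0 T) :=
    monotoneOn_primitive_of_nonneg hφ fun s hs => (hWpos _ (hupos s hs)).le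
  have hI0 : ∀ r ∈ Icc 0 T, 0 ≤ I r := fun r hr =>
    intervalIntegral.integral_same.symm.le.trans (hI_mono (left_mem_Icc.mpr hT) hr hr.1)
  have hv_mono : MonotoneOn v (Icc 0 T) := fun r₁ hr₁ r₂ hr₂ h =>
    add_le_add_right (mul_le_mul_of_nonneg_left (mul_le_mul (Real.rpow_le_rpow hr₁.1 h hγ)
      (hI_mono hr₁ hr₂ h) (hI0 r₁ hr₁) (Real.rpow_nonneg hr₂.1 _)) hB) A
  have hu_le_v : ∀ t ∈ Icc 0 T, u t ≤ v t := fun t ht => (hle t ht).trans_eq (by ring)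
  have hv_pos : ∀ r ∈ Icc 0 T, 0 < v r := fun r hr => (hupos r hr).trans_le (hu_le_v r hr)
  have hv' : ∀ r ∈ Ioo 0 T,
      ∃ v', HasDerivAt v v' r ∧ v' ≤ B * ((γ + 1) * r ^ γ) * W (v r) := by
    intro r hr
    have hr' : r ∈ Icc 0 T := Ioo_subset_Icc_self hr
    obtain ⟨d, hd, hd_le⟩ := exists_hasDerivAt_rpow_mul_primitive_le hγ hφ hr fun s hs =>
      have hsT : s ∈ Icc 0 T := ⟨hs.1, hs.2.trans hr'.2⟩
      hWmono (hupos s hsT) (hv_pos r hr') ((hu_le_v s hsT).trans (hv_mono hsT hr' hs.2))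
    exact ⟨_, (hd.const_mul B).const_add A,
      (mul_le_mul_of_nonneg_left hd_le hB).trans_eq (by ring)⟩
  have hc' : ∀ r ∈ Ioo 0 T,
      HasDerivAt (fun r : ℝ => B * r ^ (γ + 1)) (B * ((γ + 1) * r ^ γ)) r := fun r hr => by
    simpa using (Real.hasDerivAt_rpow_const (p := γ + 1) (Or.inl hr.1.ne')).const_mul B
  have hD := antitoneOn_bihariF_comp_sub hWpos hWcont (v := v) (c := fun r => B * r ^ (γ + 1))
    (continuousOn_const.add (continuousOn_const.mul
      ((continuousOn_id.rpow_const fun _ _ => Or.inr hγ).mul hI))) hv_pos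
    (continuousOn_const.mul (continuousOn_id.rpow_const fun _ _ => Or.inr (by linarith))) hc' hv'
    (left_mem_Icc.mpr hT) (right_mem_Icc.mpr hT) hT
  have hv0 : v 0 = A := by simp [v, I]
  simp only [hv0, Real.zero_rpow (by linarith : γ + 1 ≠ 0), mul_zero, sub_zero] at hD
  have huv := (strictMonoOn_bihariF hWpos hWcont).monotoneOn (hupos T (right_mem_Icc.mpr hT))
    (hv_pos T (right_mem_Icc.mpr hT)) (hu_le_v T (right_mem_Icc.mpr hT))
  linarith

/-- The Beta value `B(1 - r, 1 - r)`. -/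
noncomputable def symmBeta (r : ℝ) : ℝ := ∫ u in (0:ℝ)..1, (1 - u) ^ (-r) * u ^ (-r)

lemma symmBeta_nonneg (r : ℝ) : 0 ≤ symmBeta r :=
  intervalIntegral.integral_nonneg zero_le_one fun u hu =>
    mul_nonneg (Real.rpow_nonneg (by linarith [hu.2]) _) (Real.rpow_nonneg hu.1 _)

lemma integral_sub_rpow_mul_rpow {r t : ℝ} (ht : 0 < t) :
    ∫ s in (0:ℝ)..t, (t - s) ^ (-r) * s ^ (-r) = t ^ (1 - 2 * r) * symmBeta r := by
  have hscale := intervalIntegral.integral_comp_mul_left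
    (fun s => (t - s) ^ (-r) * s ^ (-r)) ht.ne' (a := 0) (b := 1)
  rw [mul_zero, mul_one] at hscale
  have hint : ∀ u ∈ uIcc (0:ℝ) 1, (t - t * u) ^ (-r) * (t * u) ^ (-r)
      = t ^ (-(2 * r)) * ((1 - u) ^ (-r) * u ^ (-r)) := fun u hu => by
    rw [uIcc_of_le zero_le_one] at hu
    rw [show t - t * u = t * (1 - u) by ring, Real.mul_rpow ht.le (by linarith [hu.2]),
      Real.mul_rpow ht.le hu.1, show -(2 * r) = -r + -r by ring, Real.rpow_add ht]
    ring
  rw [intervalIntegral.integral_congr hint, intervalIntegral.integral_const_mul, smul_eq_mul,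
    eq_inv_mul_iff_mul_eq₀ ht.ne'] at hscale
  rw [symmBeta, ← hscale, ← mul_assoc, sub_eq_add_neg, Real.rpow_add ht, Real.rpow_one]

lemma intervalIntegrable_sub_rpow_mul_rpow {r t : ℝ} (hr : r < 1) (ht : 0 ≤ t) :
    IntervalIntegrable (fun s => (t - s) ^ (-r) * s ^ (-r)) volume 0 t := by
  rcases ht.eq_or_lt with rfl | ht
  · exact IntervalIntegrable.refl
  have hsing : IntervalIntegrable (fun s : ℝ => s ^ (-r)) volume 0 (t / 2) :=
    intervalIntegral.intervalIntegrable_rpow' (by linarith)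
  have hleft : IntervalIntegrable (fun s => (t - s) ^ (-r) * s ^ (-r)) volume 0 (t / 2) := by
    refine hsing.continuousOn_mul ?_
    refine (continuousOn_const.sub continuousOn_id).rpow_const fun s hs => Or.inl ?_
    rw [uIcc_of_le (by linarith)] at hs
    exact (show 0 < t - s by linarith [hs.2]).ne'
  have hright : IntervalIntegrable (fun s => (t - s) ^ (-r) * s ^ (-r)) volume (t / 2) t := by
    have hsing' := hsing.comp_sub_left t
    rw [sub_zero, show t - t / 2 = t / 2 by ring] at hsing'
    refine hsing'.symm.mul_continuousOn ?_
    refine continuousOn_id.rpow_const fun s hs => Or.inl ?_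
    rw [uIcc_of_le (by linarith)] at hs
    exact (show 0 < s by linarith [hs.1]).ne'
  exact hleft.trans hright

lemma sub_rpow_mul_rpow_rpow {r t s p : ℝ} (hs : s ∈ Icc 0 t) :
    ((t - s) ^ (-r) * s ^ (-r)) ^ p = (t - s) ^ (-(p * r)) * s ^ (-(p * r)) := by
  have hts : 0 ≤ t - s := by linarith [hs.2]
  rw [Real.mul_rpow (Real.rpow_nonneg hts _) (Real.rpow_nonneg hs.1 _), ← Real.rpow_mul hts,
    ← Real.rpow_mul hs.1, neg_mul, mul_comm r]

lemma integral_sub_rpow_mul_rpow_mul_le {p q r t : ℝ} (hpq : p.HolderConjugate q)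
    (hr : p * r < 1) (ht : 0 ≤ t) {g : ℝ → ℝ} (hg : ContinuousOn g (Icc 0 t))
    (hg0 : ∀ s ∈ Icc 0 t, 0 ≤ g s) :
    ∫ s in (0:ℝ)..t, (t - s) ^ (-r) * s ^ (-r) * g s
      ≤ t ^ (1 / p - 2 * r) * symmBeta (p * r) ^ (1 / p)
        * (∫ s in (0:ℝ)..t, g s ^ q) ^ (1 / q) := by
  rcases ht.eq_or_lt with rfl | ht
  · simp [Real.zero_rpow (inv_ne_zero hpq.symm.ne_zero)]
  have hKp : EqOn (fun s => ((t - s) ^ (-r) * s ^ (-r)) ^ p)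
      (fun s => (t - s) ^ (-(p * r)) * s ^ (-(p * r))) (uIcc 0 t) := fun s hs =>
    sub_rpow_mul_rpow_rpow (by rwa [uIcc_of_le ht.le] at hs)
  have hholder := intervalIntegral.integral_mul_le_Lp_mul_Lq_of_nonneg ht.le hpq
    (f := fun s => (t - s) ^ (-r) * s ^ (-r)) (g := g)
    (Measurable.aestronglyMeasurable (by fun_prop))
    ((hg.mono Ioc_subset_Icc_self).aestronglyMeasurable measurableSet_Ioc)
    (fun s hs => mul_nonneg (Real.rpow_nonneg (by linarith [hs.2]) _) (Real.rpow_nonneg hs.1.le _))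
    (fun s hs => hg0 s (Ioc_subset_Icc_self hs))
    ((intervalIntegrable_sub_rpow_mul_rpow hr ht.le).congr_uIoo
      (hKp.symm.mono uIoo_subset_uIcc_self))
    ((hg.rpow_const fun _ _ => Or.inr hpq.symm.nonneg).intervalIntegrable_of_Icc ht.le)
  rw [intervalIntegral.integral_congr hKp, integral_sub_rpow_mul_rpow ht,
    Real.mul_rpow (by positivity) (symmBeta_nonneg (p * r)), ← Real.rpow_mul ht.le] at hholder
  convert hholder using 3
  field_simp [hpq.ne_zero]

/-- `W(u) = ϱ(u ^ (1/q)) ^ q`, so that the paper's `F` is `bihariF (bihariW ϱ q)`. -/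
noncomputable def bihariW (ϱ : ℝ → ℝ) (q u : ℝ) : ℝ := ϱ (u ^ (1 / q)) ^ q

section BihariW

variable {ϱ : ℝ → ℝ} {q : ℝ}

lemma bihariW_rpow (hq : q ≠ 0) {x : ℝ} (hx : 0 ≤ x) : bihariW ϱ q (x ^ q) = ϱ x ^ q := by
  rw [bihariW, one_div, Real.rpow_rpow_inv hx hq]

lemma bihariW_pos (hpos : ∀ u, 0 < u → 0 < ϱ u) {u : ℝ} (hu : 0 < u) : 0 < bihariW ϱ q u :=
  Real.rpow_pos_of_pos (hpos _ (Real.rpow_pos_of_pos hu _)) _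

lemma monotoneOn_bihariW (hq : 0 ≤ q) (hmono : MonotoneOn ϱ (Ici 0))
    (hpos : ∀ u, 0 < u → 0 < ϱ u) : MonotoneOn (bihariW ϱ q) (Ioi 0) := fun u hu v hv huv =>
  Real.rpow_le_rpow (hpos _ (Real.rpow_pos_of_pos hu _)).le
    (hmono (Real.rpow_nonneg hu.le _) (Real.rpow_nonneg (le_of_lt hv) _)
      (Real.rpow_le_rpow hu.le huv (by positivity))) hq

lemma continuousOn_bihariW (hq : 0 ≤ q) (hϱ : ContinuousOn ϱ (Ioi 0)) :
    ContinuousOn (bihariW ϱ q) (Ioi 0) :=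
  (hϱ.comp (continuousOn_id.rpow_const fun _ hu => Or.inl (ne_of_gt hu))
    fun _ hu => Real.rpow_pos_of_pos hu _).rpow_const fun _ _ => Or.inr hq

end BihariW

section Majorant

variable {α a b p q t ε : ℝ} {ϱ f : ℝ → ℝ}

lemma integral_kernel_mul_le (hpq : p.HolderConjugate q) (hpα : p * α < 1) (ht : 0 ≤ t)
    (hε : 0 < ε) (hϱ : ContinuousOn ϱ (Ioi 0)) (hmono : MonotoneOn ϱ (Ici 0)) (h0 : ϱ 0 = 0)
    (hf : ContinuousOn f (Icc 0 t)) (hfnn : ∀ s ∈ Icc 0 t, 0 ≤ f s) :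
    ∫ s in (0:ℝ)..t, (t - s) ^ (-α) * s ^ (-α) * ϱ (f s)
      ≤ t ^ (1 / p - 2 * α) * symmBeta (p * α) ^ (1 / p)
        * (∫ s in (0:ℝ)..t, ϱ (f s + ε) ^ q) ^ (1 / q) := by
  have hϱ0 : ∀ x, 0 ≤ x → 0 ≤ ϱ x := fun x hx => h0 ▸ hmono self_mem_Ici hx hx
  have hfε : ContinuousOn (fun s => ϱ (f s + ε)) (Icc 0 t) :=
    hϱ.comp (hf.add continuousOn_const) fun s hs => mem_Ioi.mpr (by linarith [hfnn s hs])
  have hK0 : ∀ s ∈ Ioc 0 t, 0 ≤ (t - s) ^ (-α) * s ^ (-α) := fun s hs =>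
    mul_nonneg (Real.rpow_nonneg (by linarith [hs.2]) _) (Real.rpow_nonneg hs.1.le _)
  refine le_trans ?_ (integral_sub_rpow_mul_rpow_mul_le hpq hpα ht hfε
    fun s hs => hϱ0 _ (by linarith [hfnn s hs]))
  simp only [intervalIntegral.integral_of_le ht]
  refine integral_mono_of_nonneg ?_ ?_ ?_
  · exact ae_restrict_of_forall_mem measurableSet_Ioc fun s hs =>
      mul_nonneg (hK0 s hs) (hϱ0 _ (hfnn s (Ioc_subset_Icc_self hs)))
  · have hα : α < 1 := by nlinarith [hpq.lt]
    rw [← IntegrableOn, ← intervalIntegrable_iff_integrableOn_Ioc_of_le ht]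
    exact (intervalIntegrable_sub_rpow_mul_rpow hα ht).mul_continuousOn
      (by rwa [uIcc_of_le ht])
  · exact ae_restrict_of_forall_mem measurableSet_Ioc fun s hs =>
      have hfs := hfnn s (Ioc_subset_Icc_self hs)
      mul_le_mul_of_nonneg_left (hmono hfs (show 0 ≤ f s + ε by linarith) (by linarith))
        (hK0 s hs)

lemma rpow_add_le_majorant (hpq : p.HolderConjugate q) (hpα : p * α < 1) (ha : 0 ≤ a)
    (hb : 0 ≤ b) (ht : 0 ≤ t) (hε : 0 < ε) (hϱ : ContinuousOn ϱ (Ioi 0))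
    (hmono : MonotoneOn ϱ (Ici 0)) (h0 : ϱ 0 = 0) (hf : ContinuousOn f (Icc 0 t))
    (hfnn : ∀ s ∈ Icc 0 t, 0 ≤ f s)
    (hineq : f t ≤ a + b * t ^ α * ∫ s in (0:ℝ)..t, (t - s) ^ (-α) * s ^ (-α) * ϱ (f s)) :
    (f t + ε) ^ q ≤ 2 ^ (q - 1) * (a + ε) ^ q
      + 2 ^ (q - 1) * b ^ q * symmBeta (p * α) ^ (q / p) * t ^ (q * (1 / p - α))
        * ∫ s in (0:ℝ)..t, bihariW ϱ q ((f s + ε) ^ q) := by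
  have hq := hpq.symm.pos
  have hα : α < 1 / p := by rw [lt_div_iff₀ hpq.pos]; linarith
  have hK := integral_kernel_mul_le hpq hpα ht hε hϱ hmono h0 hf hfnn (q := q)
  set C := symmBeta (p * α)
  set J := ∫ s in (0:ℝ)..t, ϱ (f s + ε) ^ q
  have hC0 : 0 ≤ C := symmBeta_nonneg _
  have hJ0 : 0 ≤ J := intervalIntegral.integral_nonneg ht fun s hs =>
    Real.rpow_nonneg (h0 ▸ hmono self_mem_Ici (show 0 ≤ f s + ε by linarith [hfnn s hs])
      (by linarith [hfnn s hs])) _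
  have hJ : ∫ s in (0:ℝ)..t, bihariW ϱ q ((f s + ε) ^ q) = J :=
    intervalIntegral.integral_congr fun s hs => bihariW_rpow hq.ne'
      (by rw [uIcc_of_le ht] at hs; linarith [hfnn s hs])
  set y := b * t ^ (1 / p - α) * C ^ (1 / p) * J ^ (1 / q) with hy
  have hle : f t + ε ≤ (a + ε) + y := by
    have htα : t ^ α * t ^ (1 / p - 2 * α) = t ^ (1 / p - α) := by
      rw [← Real.rpow_add' ht (by linarith)]; ring_nf
    calc f t + ε ≤ a + b * t ^ α * (t ^ (1 / p - 2 * α) * C ^ (1 / p) * J ^ (1 / q)) + ε := by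
          linarith [mul_le_mul_of_nonneg_left hK (by positivity : 0 ≤ b * t ^ α)]
      _ = (a + ε) + y := by rw [hy, ← htα]; ring
  have hyq : y ^ q = b ^ q * C ^ (q / p) * t ^ (q * (1 / p - α)) * J := by
    rw [Real.mul_rpow (by positivity) (by positivity),
      Real.mul_rpow (by positivity) (by positivity), Real.mul_rpow hb (by positivity),
      ← Real.rpow_mul ht, ← Real.rpow_mul hC0, ← Real.rpow_mul hJ0, one_div_mul_cancel hq.ne',
      Real.rpow_one, one_div_mul_eq_div, mul_comm (1 / p - α)]
    ring
  calc (f t + ε) ^ q ≤ ((a + ε) + y) ^ q :=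
        Real.rpow_le_rpow (by linarith [hfnn t (right_mem_Icc.mpr ht)]) hle hq.le
    _ ≤ 2 ^ (q - 1) * ((a + ε) ^ q + y ^ q) :=
        Real.rpow_add_le_mul_rpow_add_rpow (by linarith) (by positivity) hpq.symm.lt.le
    _ = _ := by rw [hyq, hJ]; ring

end Majorant

theorem bihariF_rpow_le {α a b p q t : ℝ} {ϱ f : ℝ → ℝ} (hpq : p.HolderConjugate q)
    (hpα : p * α < 1) (ha : 0 ≤ a) (hb : 0 ≤ b) (ht : 0 ≤ t) (hϱ : ContinuousOn ϱ (Ioi 0))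
    (hmono : MonotoneOn ϱ (Ici 0)) (h0 : ϱ 0 = 0) (hpos : ∀ u, 0 < u → 0 < ϱ u)
    (hf : ContinuousOn f (Icc 0 t)) (hfnn : ∀ s ∈ Icc 0 t, 0 ≤ f s)
    (hineq : ∀ r ∈ Icc 0 t,
      f r ≤ a + b * r ^ α * ∫ s in (0:ℝ)..r, (r - s) ^ (-α) * s ^ (-α) * ϱ (f s))
    (hft : 0 < f t) :
    bihariF (bihariW ϱ q) (f t ^ q) ≤ bihariF (bihariW ϱ q) (2 ^ (q - 1) * a ^ q)
      + 2 ^ (q - 1) * b ^ q * symmBeta (p * α) ^ (q / p) * t ^ (q * (1 / p - α) + 1) := by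
  have hq := hpq.symm.pos
  have hWpos : ∀ u, 0 < u → 0 < bihariW ϱ q u := fun u => bihariW_pos hpos
  have hWcont := continuousOn_bihariW hq.le hϱ
  have hγ : 0 ≤ q * (1 / p - α) :=
    mul_nonneg hq.le (by rw [sub_nonneg, le_div_iff₀ hpq.pos]; linarith)
  set B := 2 ^ (q - 1) * b ^ q * symmBeta (p * α) ^ (q / p)
  have htend : Tendsto (fun ε => 2 ^ (q - 1) * (a + ε) ^ q) (𝓝[>] 0)
      (𝓝[Ici 0] (2 ^ (q - 1) * a ^ q)) := by
    refine tendsto_nhdsWithin_iff.mpr ⟨?_, eventually_nhdsWithin_of_forall fun ε hε => ?_⟩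
    · have hcont : Continuous fun ε : ℝ => 2 ^ (q - 1) * (a + ε) ^ q :=
        continuous_const.mul ((continuous_const.add continuous_id).rpow_const
          fun _ => Or.inr hq.le)
      simpa using (hcont.tendsto 0).mono_left nhdsWithin_le_nhds
    · have : 0 < a + ε := by linarith [mem_Ioi.mp hε]
      exact mem_Ici.mpr (by positivity)
  rw [← sub_le_iff_le_add]
  refine (upperSemicontinuousWithinAt_bihariF hWpos hWcont (by positivity)).le_of_tendsto
    htend ?_
  filter_upwards [self_mem_nhdsWithin] with ε (hε : 0 < ε)
  rw [sub_le_iff_le_add]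
  have hfε : ∀ s ∈ Icc 0 t, 0 < f s + ε := fun s hs => by linarith [hfnn s hs]
  have hmaj : ∀ r ∈ Icc 0 t, (f r + ε) ^ q ≤ 2 ^ (q - 1) * (a + ε) ^ q
      + B * r ^ (q * (1 / p - α)) * ∫ s in (0:ℝ)..r, bihariW ϱ q ((f s + ε) ^ q) :=
    fun r hr => rpow_add_le_majorant hpq hpα ha hb hr.1 hε hϱ hmono h0
      (hf.mono (Icc_subset_Icc le_rfl hr.2)) (fun s hs => hfnn s ⟨hs.1, hs.2.trans hr.2⟩)
      (hineq r hr)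
  calc bihariF (bihariW ϱ q) (f t ^ q) ≤ bihariF (bihariW ϱ q) ((f t + ε) ^ q) :=
        (strictMonoOn_bihariF hWpos hWcont).monotoneOn (Real.rpow_pos_of_pos hft _)
          (Real.rpow_pos_of_pos (hfε t (right_mem_Icc.mpr ht)) _)
          (Real.rpow_le_rpow hft.le (by linarith) hq.le)
    _ ≤ _ := bihariF_le_of_le_add_mul_integral hWpos hWcont
        (monotoneOn_bihariW hq.le hmono hpos) (u := fun s => (f s + ε) ^ q)
        (mul_nonneg (by positivity) (Real.rpow_nonneg (symmBeta_nonneg _) _))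
        hγ ht ((hf.add continuousOn_const).rpow_const fun _ _ => Or.inr hq.le)
        (fun s hs => Real.rpow_pos_of_pos (hfε s hs) _) hmaj

theorem bihari_type_quantitative_general (α a b T p q : ℝ)
    (hp1 : 1 < p) (hαp : α < 1/p) (hpq : 1/p + 1/q = 1)
    (ha : 0 ≤ a) (hb : 0 ≤ b)
    (ϱ : ℝ → ℝ) (hconc : ConcaveOn ℝ (Set.Ici 0) ϱ)
    (hmono : MonotoneOn ϱ (Set.Ici 0))
    (h0 : ϱ 0 = 0) (hpos : ∀ u : ℝ, 0 < u → 0 < ϱ u)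
    (f : ℝ → ℝ) (hf : ContinuousOn f (Set.Icc 0 T))
    (hfnn : ∀ t ∈ Set.Icc (0:ℝ) T, 0 ≤ f t)
    (hineq : ∀ t ∈ Set.Icc (0:ℝ) T,
      f t ≤ a + b * t ^ α * ∫ s in (0:ℝ)..t, (t - s) ^ (-α) * s ^ (-α) * ϱ (f s)) :
    ∀ t ∈ Set.Icc (0:ℝ) T, ∀ x : ℝ, 0 < x →
      (∫ u in (1:ℝ)..x, 1 / (ϱ (u ^ (1/q))) ^ q) =
        (∫ u in (1:ℝ)..(2 ^ (q-1) * a ^ q), 1 / (ϱ (u ^ (1/q))) ^ q)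
          + 2 ^ (q-1) * b ^ q
            * ((∫ u in (0:ℝ)..1, (1 - u) ^ (-(p*α)) * u ^ (-(p*α)))) ^ (q/p)
            * t ^ (q * (1/p - α) + 1)
      → f t ≤ x ^ (1/q) := by
  intro t ht x hx hFx
  have hpq' : p.HolderConjugate q :=
    Real.holderConjugate_iff.mpr ⟨hp1, by simpa only [one_div] using hpq⟩
  have hq := hpq'.symm.pos
  have hpα : p * α < 1 := by rwa [lt_div_iff₀ hpq'.pos, mul_comm] at hαp
  have hϱ : ContinuousOn ϱ (Ioi 0) := by simpa using hconc.continuousOn_interior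
  rcases (hfnn t ht).eq_or_lt with hft | hft
  · rw [← hft]; positivity
  have hest := bihariF_rpow_le hpq' hpα ha hb ht.1 hϱ hmono h0 hpos
    (hf.mono (Icc_subset_Icc le_rfl ht.2)) (fun s hs => hfnn s ⟨hs.1, hs.2.trans ht.2⟩)
    (fun s hs => hineq s ⟨hs.1, hs.2.trans ht.2⟩) hft
  have hfx : f t ^ q ≤ x :=
    ((strictMonoOn_bihariF (fun _ => bihariW_pos hpos)
      (continuousOn_bihariW hq.le hϱ)).le_iff_le (Real.rpow_pos_of_pos hft _) hx).mp
      (hest.trans hFx.ge)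
  calc f t = (f t ^ q) ^ (1 / q) := by rw [one_div, Real.rpow_rpow_inv hft.le hq.ne']
    _ ≤ x ^ (1 / q) := Real.rpow_le_rpow (by positivity) hfx (by positivity)

theorem bihari_type_quantitative (α a b T p q : ℝ) (hα : 1/2 < α) (hα1 : α < 1)
    (hp1 : 1 < p) (hp2 : p < 2) (hαp : α < 1/p) (hpq : 1/p + 1/q = 1)
    (ha : 0 ≤ a) (hb : 0 ≤ b) (hT : 0 < T)
    (ϱ : ℝ → ℝ) (hconc : ConcaveOn ℝ (Set.Ici 0) ϱ)
    (hmono : MonotoneOn ϱ (Set.Ici 0))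
    (h0 : ϱ 0 = 0) (hpos : ∀ u : ℝ, 0 < u → 0 < ϱ u)
    (f : ℝ → ℝ) (hf : ContinuousOn f (Set.Icc 0 T))
    (hfnn : ∀ t ∈ Set.Icc (0:ℝ) T, 0 ≤ f t)
    (hineq : ∀ t ∈ Set.Icc (0:ℝ) T,
      f t ≤ a + b * t ^ α * ∫ s in (0:ℝ)..t, (t - s) ^ (-α) * s ^ (-α) * ϱ (f s)) :
    ∀ t ∈ Set.Icc (0:ℝ) T, ∀ x : ℝ, 0 < x →
      (∫ u in (1:ℝ)..x, 1 / (ϱ (u ^ (1/q))) ^ q) =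
        (∫ u in (1:ℝ)..(2 ^ (q-1) * a ^ q), 1 / (ϱ (u ^ (1/q))) ^ q)
          + 2 ^ (q-1) * b ^ q
            * ((∫ u in (0:ℝ)..1, (1 - u) ^ (-(p*α)) * u ^ (-(p*α)))) ^ (q/p)
            * t ^ (q * (1/p - α) + 1)
      → f t ≤ x ^ (1/q) :=
  bihari_type_quantitative_general α a b T p q hp1 hαp hpq ha hb ϱ hconc hmono h0 hpos f hf hfnn
    hineq
end

section
/- Let K > 0, β ∈ (0,1], and let σ : [0,T] × ℝ → ℝ be a function such that: |∂_x σ(t,x)| ≤ K for all t, x; |∂_x σ(t,x) − ∂_x σ(t,y)| ≤ K|x−y|; and |σ(t,x) − σ(s,x)| + |∂_x σ(t,x) − ∂_x σ(s,x)| ≤ K|t−s|^β. Then for all s, t ∈ [0,T] and x₁, x₂, y₁, y₂ ∈ ℝ: |σ(t,x₁) − σ(s,x₂) − σ(t,y₁) + σ(s,y₂)| ≤ K|x₁ − x₂ − y₁ + y₂| + K|x₁ − y₁|·|t−s|^β + K|x₁ − y₁|·(|x₁ − x₂| + |y₁ − y₂|). -/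
open Set

set_option maxHeartbeats 1000000

private lemma seg_rep (f f' : ℝ → ℝ) (hd : ∀ x, HasDerivAt f (f' x) x)
    (hc : Continuous f') (x y : ℝ) :
    f x - f y = ∫ θ in (0:ℝ)..1, f' (y + θ * (x - y)) * (x - y) := by
  have hG : ∀ θ ∈ Set.uIcc (0:ℝ) 1,
      HasDerivAt (fun θ : ℝ => f (y + θ * (x - y)))
        (f' (y + θ * (x - y)) * (x - y)) θ := by
    intro θ _
    have h1 : HasDerivAt (fun θ : ℝ => y + θ * (x - y)) (x - y) θ := by
      simpa using ((hasDerivAt_id θ).mul_const (x - y)).const_add y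
    exact (hd _).comp θ h1
  have hint : IntervalIntegrable (fun θ : ℝ => f' (y + θ * (x - y)) * (x - y))
      MeasureTheory.volume 0 1 :=
    ((hc.comp (by continuity)).mul continuous_const).intervalIntegrable 0 1
  have := intervalIntegral.integral_eq_sub_of_hasDerivAt hG hint
  simpa using this.symm

theorem four_point_estimate (T K β : ℝ) (hK : 0 < K) (hβ0 : 0 < β) (hβ1 : β ≤ 1)
    (hT : 0 < T) (σ σ' : ℝ → ℝ → ℝ)
    (hderiv : ∀ t ∈ Set.Icc (0:ℝ) T, ∀ x : ℝ, HasDerivAt (σ t) (σ' t x) x)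
    (hbound : ∀ t ∈ Set.Icc (0:ℝ) T, ∀ x : ℝ, |σ' t x| ≤ K)
    (hlip : ∀ t ∈ Set.Icc (0:ℝ) T, ∀ x y : ℝ, |σ' t x - σ' t y| ≤ K * |x - y|)
    (hHol : ∀ s ∈ Set.Icc (0:ℝ) T, ∀ t ∈ Set.Icc (0:ℝ) T, ∀ x : ℝ,
      |σ t x - σ s x| + |σ' t x - σ' s x| ≤ K * |t - s| ^ β) :
    ∀ s ∈ Set.Icc (0:ℝ) T, ∀ t ∈ Set.Icc (0:ℝ) T, ∀ x₁ x₂ y₁ y₂ : ℝ,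
      |σ t x₁ - σ s x₂ - σ t y₁ + σ s y₂|
        ≤ K * |x₁ - x₂ - y₁ + y₂| + K * |x₁ - y₁| * |t - s| ^ β
          + K * |x₁ - y₁| * (|x₁ - x₂| + |y₁ - y₂|) := by
  intro s hs t ht x₁ x₂ y₁ y₂
  -- continuity of σ' r for r ∈ [0,T]
  have hcont : ∀ r ∈ Set.Icc (0:ℝ) T, Continuous (σ' r) := by
    intro r hr
    have : LipschitzWith (Real.toNNReal K) (σ' r) := by
      apply LipschitzWith.of_dist_le_mul
      intro a b
      rw [Real.dist_eq, Real.dist_eq, Real.coe_toNNReal _ hK.le]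
      exact hlip r hr a b
    exact this.continuous
  have hct := hcont t ht
  have hcs := hcont s hs
  -- representations
  have repA : (σ t x₁ - σ s x₁) - (σ t y₁ - σ s y₁)
      = ∫ θ in (0:ℝ)..1, (σ' t (y₁ + θ * (x₁ - y₁)) - σ' s (y₁ + θ * (x₁ - y₁))) * (x₁ - y₁) :=
    seg_rep (fun x => σ t x - σ s x) (fun x => σ' t x - σ' s x)
      (fun x => (hderiv t ht x).sub (hderiv s hs x)) (hct.sub hcs) x₁ y₁
  have rep1 : σ s x₁ - σ s y₁
      = ∫ θ in (0:ℝ)..1, σ' s (y₁ + θ * (x₁ - y₁)) * (x₁ - y₁) :=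
    seg_rep (σ s) (σ' s) (hderiv s hs) hcs x₁ y₁
  have rep2 : σ s x₂ - σ s y₂
      = ∫ θ in (0:ℝ)..1, σ' s (y₂ + θ * (x₂ - y₂)) * (x₂ - y₂) :=
    seg_rep (σ s) (σ' s) (hderiv s hs) hcs x₂ y₂
  -- Term A bound
  have hAbound : |(σ t x₁ - σ s x₁) - (σ t y₁ - σ s y₁)|
      ≤ K * |t - s| ^ β * |x₁ - y₁| := by
    rw [repA]
    have := intervalIntegral.norm_integral_le_of_norm_le_const
      (C := K * |t - s| ^ β * |x₁ - y₁|)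
      (f := fun θ : ℝ => (σ' t (y₁ + θ * (x₁ - y₁)) - σ' s (y₁ + θ * (x₁ - y₁))) * (x₁ - y₁))
      (a := 0) (b := 1) ?_
    · calc |∫ θ in (0:ℝ)..1, (σ' t (y₁ + θ * (x₁ - y₁)) - σ' s (y₁ + θ * (x₁ - y₁))) * (x₁ - y₁)|
          = ‖∫ θ in (0:ℝ)..1, (σ' t (y₁ + θ * (x₁ - y₁)) - σ' s (y₁ + θ * (x₁ - y₁))) * (x₁ - y₁)‖ :=
            (Real.norm_eq_abs _).symm
        _ ≤ K * |t - s| ^ β * |x₁ - y₁| * |1 - 0| := this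
        _ = K * |t - s| ^ β * |x₁ - y₁| := by norm_num
    · intro θ _
      beta_reduce
      rw [Real.norm_eq_abs, abs_mul]
      have h1 : |σ' t (y₁ + θ * (x₁ - y₁)) - σ' s (y₁ + θ * (x₁ - y₁))| ≤ K * |t - s| ^ β := by
        have := hHol s hs t ht (y₁ + θ * (x₁ - y₁))
        have h0 : (0:ℝ) ≤ |σ t (y₁ + θ * (x₁ - y₁)) - σ s (y₁ + θ * (x₁ - y₁))| := abs_nonneg _
        linarith
      exact mul_le_mul_of_nonneg_right h1 (abs_nonneg _)
  -- Term B bound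
  have hBbound : |(σ s x₁ - σ s y₁) - (σ s x₂ - σ s y₂)|
      ≤ K * |x₁ - x₂ - y₁ + y₂| + K * |x₁ - y₁| * (|x₁ - x₂| + |y₁ - y₂|) := by
    rw [rep1, rep2]
    have hi1 : IntervalIntegrable (fun θ : ℝ => σ' s (y₁ + θ * (x₁ - y₁)) * (x₁ - y₁))
        MeasureTheory.volume 0 1 :=
      ((hcs.comp (by continuity)).mul continuous_const).intervalIntegrable 0 1
    have hi2 : IntervalIntegrable (fun θ : ℝ => σ' s (y₂ + θ * (x₂ - y₂)) * (x₂ - y₂))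
        MeasureTheory.volume 0 1 :=
      ((hcs.comp (by continuity)).mul continuous_const).intervalIntegrable 0 1
    rw [← intervalIntegral.integral_sub hi1 hi2]
    have := intervalIntegral.norm_integral_le_of_norm_le_const
      (C := K * |x₁ - x₂ - y₁ + y₂| + K * |x₁ - y₁| * (|x₁ - x₂| + |y₁ - y₂|))
      (f := fun θ : ℝ => σ' s (y₁ + θ * (x₁ - y₁)) * (x₁ - y₁)
        - σ' s (y₂ + θ * (x₂ - y₂)) * (x₂ - y₂))
      (a := 0) (b := 1) ?_
    · calc |∫ θ in (0:ℝ)..1, (σ' s (y₁ + θ * (x₁ - y₁)) * (x₁ - y₁) - σ' s (y₂ + θ * (x₂ - y₂)) * (x₂ - y₂))|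
          = ‖∫ θ in (0:ℝ)..1, (σ' s (y₁ + θ * (x₁ - y₁)) * (x₁ - y₁) - σ' s (y₂ + θ * (x₂ - y₂)) * (x₂ - y₂))‖ :=
            (Real.norm_eq_abs _).symm
        _ ≤ (K * |x₁ - x₂ - y₁ + y₂| + K * |x₁ - y₁| * (|x₁ - x₂| + |y₁ - y₂|)) * |1 - 0| := this
        _ = _ := by norm_num
    · intro θ hθ
      beta_reduce
      have hθ0 : 0 ≤ θ := le_of_lt (by simpa using (Set.mem_Ioc.mp (by simpa [Set.uIoc_of_le] using hθ)).1)
      have hθ1 : θ ≤ 1 := (Set.mem_Ioc.mp (by simpa [Set.uIoc_of_le] using hθ)).2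
      set u₁ := y₁ + θ * (x₁ - y₁) with hu₁
      set u₂ := y₂ + θ * (x₂ - y₂) with hu₂
      have key : σ' s u₁ * (x₁ - y₁) - σ' s u₂ * (x₂ - y₂)
          = σ' s u₂ * ((x₁ - y₁) - (x₂ - y₂)) + (σ' s u₁ - σ' s u₂) * (x₁ - y₁) := by ring
      rw [Real.norm_eq_abs, key]
      have h1 : |σ' s u₂ * ((x₁ - y₁) - (x₂ - y₂))| ≤ K * |x₁ - x₂ - y₁ + y₂| := by
        rw [abs_mul]
        have : |(x₁ - y₁) - (x₂ - y₂)| = |x₁ - x₂ - y₁ + y₂| := by ring_nf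
        rw [this]
        exact mul_le_mul_of_nonneg_right (hbound s hs u₂) (abs_nonneg _)
      have h2 : |(σ' s u₁ - σ' s u₂) * (x₁ - y₁)|
          ≤ K * |x₁ - y₁| * (|x₁ - x₂| + |y₁ - y₂|) := by
        rw [abs_mul]
        have hu : |u₁ - u₂| ≤ |x₁ - x₂| + |y₁ - y₂| := by
          have : u₁ - u₂ = (1 - θ) * (y₁ - y₂) + θ * (x₁ - x₂) := by
            rw [hu₁, hu₂]; ring
          rw [this]
          calc |(1 - θ) * (y₁ - y₂) + θ * (x₁ - x₂)|
              ≤ |(1 - θ) * (y₁ - y₂)| + |θ * (x₁ - x₂)| := abs_add_le _ _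
            _ = (1 - θ) * |y₁ - y₂| + θ * |x₁ - x₂| := by
                rw [abs_mul, abs_mul, abs_of_nonneg (by linarith), abs_of_nonneg hθ0]
            _ ≤ |x₁ - x₂| + |y₁ - y₂| := by
                nlinarith [abs_nonneg (y₁ - y₂), abs_nonneg (x₁ - x₂)]
        have hl : |σ' s u₁ - σ' s u₂| ≤ K * (|x₁ - x₂| + |y₁ - y₂|) :=
          (hlip s hs u₁ u₂).trans (mul_le_mul_of_nonneg_left hu hK.le)
        calc |σ' s u₁ - σ' s u₂| * |x₁ - y₁|
            ≤ K * (|x₁ - x₂| + |y₁ - y₂|) * |x₁ - y₁| :=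
              mul_le_mul_of_nonneg_right hl (abs_nonneg _)
          _ = K * |x₁ - y₁| * (|x₁ - x₂| + |y₁ - y₂|) := by ring
      calc |σ' s u₂ * ((x₁ - y₁) - (x₂ - y₂)) + (σ' s u₁ - σ' s u₂) * (x₁ - y₁)|
          ≤ |σ' s u₂ * ((x₁ - y₁) - (x₂ - y₂))| + |(σ' s u₁ - σ' s u₂) * (x₁ - y₁)| := abs_add_le _ _
        _ ≤ K * |x₁ - x₂ - y₁ + y₂| + K * |x₁ - y₁| * (|x₁ - x₂| + |y₁ - y₂|) := add_le_add h1 h2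
  -- combine
  have hsplit : σ t x₁ - σ s x₂ - σ t y₁ + σ s y₂
      = ((σ t x₁ - σ s x₁) - (σ t y₁ - σ s y₁)) + ((σ s x₁ - σ s y₁) - (σ s x₂ - σ s y₂)) := by
    ring
  rw [hsplit]
  calc |((σ t x₁ - σ s x₁) - (σ t y₁ - σ s y₁)) + ((σ s x₁ - σ s y₁) - (σ s x₂ - σ s y₂))|
      ≤ |(σ t x₁ - σ s x₁) - (σ t y₁ - σ s y₁)| + |(σ s x₁ - σ s y₁) - (σ s x₂ - σ s y₂)| :=
        abs_add_le _ _
    _ ≤ K * |t - s| ^ β * |x₁ - y₁|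
        + (K * |x₁ - x₂ - y₁ + y₂| + K * |x₁ - y₁| * (|x₁ - x₂| + |y₁ - y₂|)) :=
        add_le_add hAbound hBbound
    _ = K * |x₁ - x₂ - y₁ + y₂| + K * |x₁ - y₁| * |t - s| ^ β
        + K * |x₁ - y₁| * (|x₁ - x₂| + |y₁ - y₂|) := by ring
end

section
/- Gronwall-type lemma with singular kernel: Let 0 < α < 1/2, a, b ≥ 0, and let u : [0,T] → [0,∞) be a bounded nondecreasing measurable function satisfying u(t) ≤ a + b ∫_0^t (s^{−α} + (t−s)^{−α−1/2}) u(s) ds for all t ∈ [0,T]. Then there is a constant C depending on α, b, T such that u(t) ≤ a·C for all t ∈ [0,T]. -/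
open MeasureTheory Set
open scoped NNReal

lemma rpow_sub_le_sub_rpow {x y γ : ℝ} (hx : 0 ≤ x) (hxy : x ≤ y) (hγ : 0 ≤ γ)
    (hγ1 : γ ≤ 1) : y ^ γ - x ^ γ ≤ (y - x) ^ γ := by
  have h := NNReal.rpow_add_le_add_rpow ((y - x).toNNReal) (x.toNNReal) hγ hγ1
  have hyx : (0:ℝ) ≤ y - x := by linarith
  have h' : ((((y - x).toNNReal + x.toNNReal) ^ γ : ℝ≥0) : ℝ)
      ≤ (((y - x).toNNReal ^ γ : ℝ≥0) : ℝ) + ((x.toNNReal ^ γ : ℝ≥0) : ℝ) := by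
    exact_mod_cast h
  rw [NNReal.coe_rpow, NNReal.coe_rpow, NNReal.coe_rpow, NNReal.coe_add,
    Real.coe_toNNReal _ hyx, Real.coe_toNNReal _ hx] at h'
  have : y - x + x = y := by ring
  rw [this] at h'
  linarith

lemma integrable_sub_rpow {p : ℝ} (hp : -1 < p) (t a b : ℝ) :
    IntervalIntegrable (fun s => (t - s) ^ p) volume a b := by
  simpa using
    (intervalIntegral.intervalIntegrable_rpow' (r := p) hp
      (a := t - a) (b := t - b)).comp_sub_left t

lemma integrable_kernel {α : ℝ} (hα0 : 0 < α) (hα : α < 1/2) (t a b : ℝ) :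
    IntervalIntegrable (fun s => s ^ (-α) + (t - s) ^ (-α - 1/2)) volume a b :=
  (intervalIntegral.intervalIntegrable_rpow' (by linarith)).add
    (integrable_sub_rpow (by linarith) t a b)

lemma kernel_integral {α : ℝ} (hα0 : 0 < α) (hα : α < 1/2) {r1 r2 t : ℝ} :
    (∫ s in r1..r2, (s ^ (-α) + (t - s) ^ (-α - 1/2)))
      = (r2 ^ (-α + 1) - r1 ^ (-α + 1)) / (-α + 1)
        + ((t - r1) ^ (-α - 1/2 + 1) - (t - r2) ^ (-α - 1/2 + 1)) / (-α - 1/2 + 1) := by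
  have ha : (-1:ℝ) < -α := by linarith
  have hb : (-1:ℝ) < -α - 1/2 := by linarith
  rw [intervalIntegral.integral_add (intervalIntegral.intervalIntegrable_rpow' ha)
    (integrable_sub_rpow hb t r1 r2),
    intervalIntegral.integral_comp_sub_left (fun x => x ^ (-α - 1/2)) t,
    integral_rpow (Or.inl ha), integral_rpow (Or.inl hb)]

set_option maxHeartbeats 1000000 in
theorem gronwall_singular_kernel (α b T : ℝ) (hα0 : 0 < α) (hα : α < 1/2)
    (hb : 0 ≤ b) (hT : 0 < T) :
    ∃ C : ℝ, ∀ a : ℝ, 0 ≤ a → ∀ u : ℝ → ℝ,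
      Measurable u → (∀ t ∈ Set.Icc (0:ℝ) T, 0 ≤ u t) →
      MonotoneOn u (Set.Icc 0 T) → (∃ M : ℝ, ∀ t ∈ Set.Icc (0:ℝ) T, u t ≤ M) →
      (∀ t ∈ Set.Icc (0:ℝ) T,
        u t ≤ a + b * ∫ s in (0:ℝ)..t, (s ^ (-α) + (t - s) ^ (-α - 1/2)) * u s) →
      ∀ t ∈ Set.Icc (0:ℝ) T, u t ≤ a * C := by
  have hg0 : (0:ℝ) < -α + 1 := by linarith
  have he0 : (0:ℝ) < -α - 1/2 + 1 := by linarith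
  -- choose δ
  have hcont : ContinuousAt
      (fun x : ℝ => b * (x ^ (-α + 1) / (-α + 1) + x ^ (-α - 1/2 + 1) / (-α - 1/2 + 1))) 0 := by
    have h1 : ContinuousAt (fun x : ℝ => x ^ (-α + 1)) 0 :=
      Real.continuousAt_rpow_const 0 _ (Or.inr hg0.le)
    have h2 : ContinuousAt (fun x : ℝ => x ^ (-α - 1/2 + 1)) 0 :=
      Real.continuousAt_rpow_const 0 _ (Or.inr he0.le)
    exact continuousAt_const.mul ((h1.div_const _).add (h2.div_const _))
  have hev : ∀ᶠ x in nhds (0:ℝ),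
      b * (x ^ (-α + 1) / (-α + 1) + x ^ (-α - 1/2 + 1) / (-α - 1/2 + 1)) < 1/2 := by
    have hf0 : b * ((0:ℝ) ^ (-α + 1) / (-α + 1) + (0:ℝ) ^ (-α - 1/2 + 1) / (-α - 1/2 + 1))
        < 1/2 := by
      rw [Real.zero_rpow (ne_of_gt hg0), Real.zero_rpow (ne_of_gt he0)]
      norm_num
    have := hcont.eventually_lt (continuousAt_const (y := (1/2:ℝ))) hf0
    simpa using this
  obtain ⟨ε, hε0, hε⟩ := Metric.eventually_nhds_iff.mp hev
  set δ : ℝ := min T (ε / 2) with hδ_def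
  have hδ0 : 0 < δ := lt_min hT (by linarith)
  have hδ : b * (δ ^ (-α + 1) / (-α + 1) + δ ^ (-α - 1/2 + 1) / (-α - 1/2 + 1)) ≤ 1/2 := by
    refine le_of_lt (hε ?_)
    have : δ ≤ ε / 2 := min_le_right _ _
    rw [Real.dist_eq, sub_zero, abs_of_pos hδ0]
    linarith
  obtain ⟨N, hN⟩ := exists_nat_ge (T / δ)
  have hNδ : T ≤ N * δ := by
    rw [div_le_iff₀ hδ0] at hN; exact hN
  set KT : ℝ := T ^ (-α + 1) / (-α + 1) + T ^ (-α - 1/2 + 1) / (-α - 1/2 + 1) with hKT_def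
  have hKT0 : 0 ≤ KT := by
    have h1 := Real.rpow_nonneg hT.le (-α + 1)
    have h2 := Real.rpow_nonneg hT.le (-α - 1/2 + 1)
    positivity
  set D : ℝ := 2 * b * KT with hD_def
  have hD0 : 0 ≤ D := by positivity
  clear_value δ KT D
  refine ⟨(2 + D) ^ N, ?_⟩
  intro a ha u hum hupos humono hMex hint
  obtain ⟨M, hM⟩ := hMex
  set M' : ℝ := max M 0 with hM'_def
  have hM'0 : 0 ≤ M' := le_max_right _ _
  have hM' : ∀ s ∈ Icc (0:ℝ) T, u s ≤ M' := fun s hs => (hM s hs).trans (le_max_left _ _)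
  clear_value M'
  -- integrability of kernel * u on [0, t]
  have hφu_int : ∀ t ∈ Icc (0:ℝ) T,
      IntervalIntegrable (fun s => (s ^ (-α) + (t - s) ^ (-α - 1/2)) * u s) volume 0 t := by
    intro t ht
    have hker := integrable_kernel hα0 hα t 0 t
    refine (hker.mul_const M').mono_fun ?_ ?_
    · exact ((Measurable.add (by fun_prop) (by fun_prop)).mul hum).aestronglyMeasurable
    · rw [Filter.EventuallyLE, ae_restrict_iff' measurableSet_uIoc]
      refine Filter.Eventually.of_forall fun s hs => ?_
      rw [uIoc_of_le ht.1] at hs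
      have hs0 : 0 < s := hs.1
      have hst : s ≤ t := hs.2
      have hsT : s ∈ Icc (0:ℝ) T := ⟨hs0.le, hst.trans ht.2⟩
      have hφ0 : 0 ≤ s ^ (-α) + (t - s) ^ (-α - 1/2) :=
        add_nonneg (Real.rpow_nonneg hs0.le _) (Real.rpow_nonneg (by linarith) _)
      have hu0 : 0 ≤ u s := hupos s hsT
      have huM : u s ≤ M' := hM' s hsT
      rw [Real.norm_eq_abs, Real.norm_eq_abs, abs_mul, abs_mul,
        abs_of_nonneg hφ0, abs_of_nonneg hu0, abs_of_nonneg hM'0]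
      exact mul_le_mul_of_nonneg_left huM hφ0
  -- main induction
  have key : ∀ n : ℕ, ∀ t ∈ Icc (0:ℝ) (min (n * δ) T), u t ≤ a * (2 + D) ^ n := by
    intro n
    induction n with
    | zero =>
      intro t ht
      simp only [Nat.cast_zero, zero_mul, min_eq_left hT.le] at ht
      have ht0 : t = 0 := le_antisymm ht.2 ht.1
      subst ht0
      have h := hint 0 ⟨le_refl _, hT.le⟩
      rw [intervalIntegral.integral_same] at h
      simpa using h
    | succ n ih =>
      intro t ht
      have htT : t ∈ Icc (0:ℝ) T := ⟨ht.1, ht.2.trans (min_le_right _ _)⟩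
      have hE1 : (1:ℝ) ≤ (2 + D) ^ n := one_le_pow₀ (by linarith)
      by_cases hcase : t ≤ min (n * δ) T
      · have h := ih t ⟨ht.1, hcase⟩
        calc u t ≤ a * (2 + D) ^ n := h
          _ ≤ a * (2 + D) ^ (n + 1) := by
            apply mul_le_mul_of_nonneg_left _ ha
            exact pow_le_pow_right₀ (by linarith) (Nat.le_succ n)
      · push_neg at hcase
        set r : ℝ := n * δ with hr_def
        have hrT : r < T := by
          by_contra hc
          push_neg at hc
          rw [min_eq_right hc] at hcase
          exact absurd htT.2 (not_le.mpr hcase)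
        have hmin : min ((n:ℝ) * δ) T = r := min_eq_left hrT.le
        rw [hmin] at hcase
        have hr0 : 0 ≤ r := by positivity
        have hrt : r < t := hcase
        have htr : t - r ≤ δ := by
          have h := ht.2.trans (min_le_left _ _)
          push_cast at h
          rw [hr_def]
          linarith
        have htpos : 0 < t := lt_of_le_of_lt hr0 hrt
        set c : ℝ := a * (2 + D) ^ n with hc_def
        clear_value c
        have hc0 : 0 ≤ c := by
          rw [hc_def]; exact mul_nonneg ha (by positivity)
        have hihc : ∀ s ∈ Icc (0:ℝ) r, u s ≤ c := fun s hs =>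
          ih s ⟨hs.1, by rw [hmin]; exact hs.2⟩
        have hφ_nonneg : ∀ s ∈ Icc (0:ℝ) t, 0 ≤ s ^ (-α) + (t - s) ^ (-α - 1/2) := by
          intro s hs
          exact add_nonneg (Real.rpow_nonneg hs.1 _)
            (Real.rpow_nonneg (by linarith [hs.2]) _)
        have hfull : IntervalIntegrable
            (fun s => (s ^ (-α) + (t - s) ^ (-α - 1/2)) * u s) volume 0 t := hφu_int t htT
        have hsub1 : IntervalIntegrable
            (fun s => (s ^ (-α) + (t - s) ^ (-α - 1/2)) * u s) volume 0 r :=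
          hfull.mono_set (by
            rw [uIcc_of_le hr0, uIcc_of_le htpos.le]
            exact Icc_subset_Icc le_rfl hrt.le)
        have hsub2 : IntervalIntegrable
            (fun s => (s ^ (-α) + (t - s) ^ (-α - 1/2)) * u s) volume r t :=
          hfull.mono_set (by
            rw [uIcc_of_le hrt.le, uIcc_of_le htpos.le]
            exact Icc_subset_Icc hr0 le_rfl)
        have hsplit : (∫ s in (0:ℝ)..t, (s ^ (-α) + (t - s) ^ (-α - 1/2)) * u s)
            = (∫ s in (0:ℝ)..r, (s ^ (-α) + (t - s) ^ (-α - 1/2)) * u s)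
              + ∫ s in r..t, (s ^ (-α) + (t - s) ^ (-α - 1/2)) * u s :=
          (intervalIntegral.integral_add_adjacent_intervals hsub1 hsub2).symm
        have hker1 : IntervalIntegrable (fun s => s ^ (-α) + (t - s) ^ (-α - 1/2)) volume 0 r :=
          integrable_kernel hα0 hα t 0 r
        have hker2 : IntervalIntegrable (fun s => s ^ (-α) + (t - s) ^ (-α - 1/2)) volume r t :=
          integrable_kernel hα0 hα t r t
        -- head estimate
        have hhead : (∫ s in (0:ℝ)..r, (s ^ (-α) + (t - s) ^ (-α - 1/2)) * u s) ≤ KT * c := by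
          have h1 : (∫ s in (0:ℝ)..r, (s ^ (-α) + (t - s) ^ (-α - 1/2)) * u s)
              ≤ ∫ s in (0:ℝ)..r, (s ^ (-α) + (t - s) ^ (-α - 1/2)) * c := by
            apply intervalIntegral.integral_mono_on hr0 hsub1 (hker1.mul_const c)
            intro s hs
            exact mul_le_mul_of_nonneg_left (hihc s hs)
              (hφ_nonneg s ⟨hs.1, hs.2.trans hrt.le⟩)
          have h2 : (∫ s in (0:ℝ)..r, (s ^ (-α) + (t - s) ^ (-α - 1/2)) * c)
              = (∫ s in (0:ℝ)..r, (s ^ (-α) + (t - s) ^ (-α - 1/2))) * c :=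
            intervalIntegral.integral_mul_const c _
          have h3 : (∫ s in (0:ℝ)..r, (s ^ (-α) + (t - s) ^ (-α - 1/2))) ≤ KT := by
            rw [kernel_integral hα0 hα, hKT_def]
            rw [Real.zero_rpow (ne_of_gt hg0), sub_zero, sub_zero]
            have e1 : r ^ (-α + 1) ≤ T ^ (-α + 1) :=
              Real.rpow_le_rpow hr0 hrT.le hg0.le
            have e2 : t ^ (-α - 1/2 + 1) ≤ T ^ (-α - 1/2 + 1) :=
              Real.rpow_le_rpow htpos.le htT.2 he0.le
            have e4 : (0:ℝ) ≤ (t - r) ^ (-α - 1/2 + 1) :=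
              Real.rpow_nonneg (by linarith) _
            exact add_le_add ((div_le_div_iff_of_pos_right hg0).mpr e1)
              ((div_le_div_iff_of_pos_right he0).mpr (by linarith))
          calc (∫ s in (0:ℝ)..r, (s ^ (-α) + (t - s) ^ (-α - 1/2)) * u s)
              ≤ (∫ s in (0:ℝ)..r, (s ^ (-α) + (t - s) ^ (-α - 1/2))) * c := by
                rw [← h2]; exact h1
            _ ≤ KT * c := mul_le_mul_of_nonneg_right h3 hc0
        -- tail estimate
        have htail : (∫ s in r..t, (s ^ (-α) + (t - s) ^ (-α - 1/2)) * u s)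
            ≤ (δ ^ (-α + 1) / (-α + 1) + δ ^ (-α - 1/2 + 1) / (-α - 1/2 + 1)) * u t := by
          have h1 : (∫ s in r..t, (s ^ (-α) + (t - s) ^ (-α - 1/2)) * u s)
              ≤ ∫ s in r..t, (s ^ (-α) + (t - s) ^ (-α - 1/2)) * u t := by
            apply intervalIntegral.integral_mono_on hrt.le hsub2 (hker2.mul_const (u t))
            intro s hs
            have hsT : s ∈ Icc (0:ℝ) T := ⟨hr0.trans hs.1, hs.2.trans htT.2⟩
            exact mul_le_mul_of_nonneg_left (humono hsT htT hs.2)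
              (hφ_nonneg s ⟨hr0.trans hs.1, hs.2⟩)
          have h2 : (∫ s in r..t, (s ^ (-α) + (t - s) ^ (-α - 1/2)) * u t)
              = (∫ s in r..t, (s ^ (-α) + (t - s) ^ (-α - 1/2))) * u t :=
            intervalIntegral.integral_mul_const (u t) _
          have h3 : (∫ s in r..t, (s ^ (-α) + (t - s) ^ (-α - 1/2)))
              ≤ δ ^ (-α + 1) / (-α + 1) + δ ^ (-α - 1/2 + 1) / (-α - 1/2 + 1) := by
            rw [kernel_integral hα0 hα]
            rw [sub_self, Real.zero_rpow (ne_of_gt he0), sub_zero]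
            have e1 : t ^ (-α + 1) - r ^ (-α + 1) ≤ (t - r) ^ (-α + 1) :=
              rpow_sub_le_sub_rpow hr0 hrt.le hg0.le (by linarith)
            have e2 : (t - r) ^ (-α + 1) ≤ δ ^ (-α + 1) :=
              Real.rpow_le_rpow (by linarith) htr hg0.le
            have e3 : (t - r) ^ (-α - 1/2 + 1) ≤ δ ^ (-α - 1/2 + 1) :=
              Real.rpow_le_rpow (by linarith) htr he0.le
            exact add_le_add ((div_le_div_iff_of_pos_right hg0).mpr (by linarith))
              ((div_le_div_iff_of_pos_right he0).mpr e3)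
          calc (∫ s in r..t, (s ^ (-α) + (t - s) ^ (-α - 1/2)) * u s)
              ≤ (∫ s in r..t, (s ^ (-α) + (t - s) ^ (-α - 1/2))) * u t := by
                rw [← h2]; exact h1
            _ ≤ (δ ^ (-α + 1) / (-α + 1) + δ ^ (-α - 1/2 + 1) / (-α - 1/2 + 1)) * u t :=
              mul_le_mul_of_nonneg_right h3 (hupos t htT)
        -- combine
        have hut := hint t htT
        rw [hsplit] at hut
        have h5 : b * ((∫ s in (0:ℝ)..r, (s ^ (-α) + (t - s) ^ (-α - 1/2)) * u s)
              + ∫ s in r..t, (s ^ (-α) + (t - s) ^ (-α - 1/2)) * u s)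
            ≤ b * (KT * c
              + (δ ^ (-α + 1) / (-α + 1) + δ ^ (-α - 1/2 + 1) / (-α - 1/2 + 1)) * u t) :=
          mul_le_mul_of_nonneg_left (add_le_add hhead htail) hb
        have hhalf : (b * (δ ^ (-α + 1) / (-α + 1) + δ ^ (-α - 1/2 + 1) / (-α - 1/2 + 1)))
            * u t ≤ (1/2) * u t :=
          mul_le_mul_of_nonneg_right hδ (hupos t htT)
        have hfin : u t ≤ 2 * a + 2 * b * KT * c := by nlinarith [hupos t htT]
        have hlast : 2 * a + 2 * b * KT * c ≤ a * (2 + D) ^ (n + 1) := by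
          rw [hc_def, pow_succ, ← hD_def]
          nlinarith [mul_nonneg ha (sub_nonneg.mpr hE1), hD0, ha, hE1]
        linarith
  intro t ht
  have hminT : min ((N : ℝ) * δ) T = T := min_eq_right hNδ
  exact key N t (by rw [hminT]; exact ht)
end

section
/- Let (E, d) be a Polish space and (Z_n) a sequence of E-valued random elements on a probability space. Then (Z_n) converges in probability to some E-valued random element if and only if for every pair of subsequences (Z_{m_k}) and (Z_{n_k}) there exists a further subsequence along which the pair (Z_{m_{k(p)}}, Z_{n_{k(p)}}) converges weakly (in distribution on E × E) to a limit law supported on the diagonal {(x,y) ∈ E × E : x = y}. -/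
open MeasureTheory Filter Topology
open scoped ENNReal BoundedContinuousFunction

/-!
If `Z n → X` in probability, then along any two subsequences the pairs converge in probability,
hence in law, to `(X, X)`, whose law lives on the diagonal. Conversely, the portmanteau theorem
applied to the closed set `{ε ≤ d(x, y)}`, which the diagonal limit laws do not charge, shows that
`(Z n)` is Cauchy in probability for every metric inducing the topology of `E`. For a complete such
metric, Borel–Cantelli makes a subsequence with summable tail probabilities converge almost surely,
and being Cauchy in probability upgrades the convergence of that subsequence to convergence in
probability of the whole sequence.
-/

theorem Filter.Tendsto.exists_strictMono_subseq_fst_snd {β γ : Type*} [LinearOrder β]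
    [NoMaxOrder β] [LinearOrder γ] [NoMaxOrder γ] {u : ℕ → β × γ}
    (hu : Tendsto u atTop (atTop ×ˢ atTop)) :
    ∃ φ : ℕ → ℕ, StrictMono φ ∧ StrictMono (fun p => (u (φ p)).1) ∧
      StrictMono (fun p => (u (φ p)).2) := by
  obtain ⟨hu₁, hu₂⟩ := tendsto_prod_iff'.1 hu
  obtain ⟨φ₁, hφ₁, h₁⟩ := strictMono_subseq_of_tendsto_atTop hu₁
  obtain ⟨φ₂, hφ₂, h₂⟩ := strictMono_subseq_of_tendsto_atTop (hu₂.comp hφ₁.tendsto_atTop)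
  exact ⟨φ₁ ∘ φ₂, hφ₁.comp hφ₂, h₁.comp hφ₂, h₂⟩

theorem cauchySeq_of_eventually_dist_lt_two_inv_pow {E : Type*} [PseudoMetricSpace E]
    {u : ℕ → E} (hu : ∀ᶠ p in atTop, dist (u p) (u (p + 1)) < 2⁻¹ ^ p) : CauchySeq u :=
  cauchySeq_of_summable_dist <| .of_norm_bounded_eventually_nat summable_geometric_two <|
    hu.mono fun p hp => by simpa [abs_of_nonneg dist_nonneg] using hp.le

namespace MeasureTheory

variable {Ω : Type*} [MeasurableSpace Ω] {P : Measure Ω}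

theorem TendstoInMeasure.prodMk {ι E F : Type*} [PseudoEMetricSpace E] [PseudoEMetricSpace F]
    {l : Filter ι} {f : ι → Ω → E} {g : Ω → E} {f' : ι → Ω → F} {g' : Ω → F}
    (h : TendstoInMeasure P f l g) (h' : TendstoInMeasure P f' l g') :
    TendstoInMeasure P (fun i ω => (f i ω, f' i ω)) l (fun ω => (g ω, g' ω)) := by
  intro ε hε
  refine tendsto_of_tendsto_of_tendsto_of_le_of_le tendsto_const_nhds
    (by simpa using (h ε hε).add (h' ε hε)) (fun _ => bot_le) fun i => ?_
  refine (measure_mono fun ω hω => ?_).trans (measure_union_le _ _)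
  simpa [Prod.edist_eq, le_max_iff] using hω

theorem TendstoInDistribution.tendsto_integral {ι E Ω' : Type*} {Ωs : ι → Type*}
    {mΩ : ∀ i, MeasurableSpace (Ωs i)} {μ : ∀ i, Measure (Ωs i)} [∀ i, IsProbabilityMeasure (μ i)]
    [MeasurableSpace Ω'] {μ' : Measure Ω'} [IsProbabilityMeasure μ']
    [TopologicalSpace E] [MeasurableSpace E] [OpensMeasurableSpace E] {l : Filter ι}
    {X : ∀ i, Ωs i → E} {Y : Ω' → E} (h : TendstoInDistribution X l Y μ μ') (g : E →ᵇ ℝ) :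
    Tendsto (fun i => ∫ ω, g (X i ω) ∂μ i) l (𝓝 (∫ ω, g (Y ω) ∂μ')) := by
  have := ProbabilityMeasure.tendsto_iff_forall_integral_tendsto.1 h.tendsto g
  simp only [ProbabilityMeasure.coe_mk] at this
  rw [integral_map h.aemeasurable_limit g.continuous.aestronglyMeasurable] at this
  simpa only [integral_map (h.forall_aemeasurable _) g.continuous.aestronglyMeasurable] using this

section

variable {E : Type*} (P : Measure Ω)

def CauchyInMeasure [Dist E] (Z : ℕ → Ω → E) : Prop :=
  ∀ ε > 0, Tendsto (fun q : ℕ × ℕ => P {ω | ε ≤ dist (Z q.1 ω) (Z q.2 ω)}) (atTop ×ˢ atTop) (𝓝 0)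

def HasDiagonalSubseqLimits [TopologicalSpace E] [MeasurableSpace E] (Z : ℕ → Ω → E) : Prop :=
  ∀ m n : ℕ → ℕ, StrictMono m → StrictMono n →
    ∃ k : ℕ → ℕ, StrictMono k ∧
      ∃ ν : Measure (E × E), IsProbabilityMeasure ν ∧ ν {p : E × E | p.1 = p.2} = 1 ∧
        ∀ g : (E × E) →ᵇ ℝ,
          Tendsto (fun p => ∫ ω, g (Z (m (k p)) ω, Z (n (k p)) ω) ∂P) atTop (𝓝 (∫ x, g x ∂ν))

end

variable {E : Type*} {Z : ℕ → Ω → E}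

theorem hasDiagonalSubseqLimits_of_tendstoInMeasure [MetricSpace E] [SecondCountableTopology E]
    [MeasurableSpace E] [BorelSpace E] [IsProbabilityMeasure P] (hZ : ∀ n, Measurable (Z n))
    {X : Ω → E} (h : TendstoInMeasure P Z atTop X) : HasDiagonalSubseqLimits P Z := by
  intro m n hm hn
  have hX := h.aemeasurable fun n => (hZ n).aemeasurable
  have hXX : AEMeasurable (fun ω => (X ω, X ω)) P := hX.prodMk hX
  have hpair := ((h.comp hm.tendsto_atTop).prodMk (h.comp hn.tendsto_atTop)).tendstoInDistribution
    fun p => ((hZ _).prodMk (hZ _)).aemeasurable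
  refine ⟨id, strictMono_id, P.map fun ω => (X ω, X ω), Measure.isProbabilityMeasure_map hXX, ?_,
    fun g => ?_⟩
  · rw [Measure.map_apply_of_aemeasurable hXX
      (isClosed_eq continuous_fst continuous_snd).measurableSet]
    simp
  · rw [integral_map hXX g.continuous.aestronglyMeasurable]
    exact hpair.tendsto_integral g

theorem tendsto_measure_preimage_of_tendsto_integral {ι T : Type*} {l : Filter ι}
    [TopologicalSpace T] [MeasurableSpace T] [OpensMeasurableSpace T] [HasOuterApproxClosed T]
    [IsProbabilityMeasure P] {Y : ι → Ω → T} (hY : ∀ i, AEMeasurable (Y i) P)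
    {ν : Measure T} [IsProbabilityMeasure ν]
    (h : ∀ g : T →ᵇ ℝ, Tendsto (fun i => ∫ ω, g (Y i ω) ∂P) l (𝓝 (∫ x, g x ∂ν)))
    {F : Set T} (hF : IsClosed F) (hνF : ν F = 0) :
    Tendsto (fun i => P (Y i ⁻¹' F)) l (𝓝 0) := by
  let μs : ι → ProbabilityMeasure T := fun i =>
    ⟨P.map (Y i), Measure.isProbabilityMeasure_map (hY i)⟩
  have hlim : Tendsto μs l (𝓝 ⟨ν, ‹_›⟩) :=
    ProbabilityMeasure.tendsto_iff_forall_integral_tendsto.2 fun g => by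
      simpa [μs, integral_map (hY _) g.continuous.aestronglyMeasurable] using h g
  have hlimsup := ProbabilityMeasure.limsup_measure_closed_le_of_tendsto hlim hF
  simp only [μs, ProbabilityMeasure.coe_mk, Measure.map_apply_of_aemeasurable (hY _)
    hF.measurableSet, hνF] at hlimsup
  exact tendsto_of_le_liminf_of_limsup_le bot_le hlimsup

theorem HasDiagonalSubseqLimits.cauchyInMeasure [MetricSpace E] [SecondCountableTopology E]
    [MeasurableSpace E] [OpensMeasurableSpace E] [IsProbabilityMeasure P]
    (hZ : ∀ n, Measurable (Z n)) (H : HasDiagonalSubseqLimits P Z) : CauchyInMeasure P Z := by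
  intro ε hε
  refine tendsto_of_subseq_tendsto fun ns hns => ?_
  obtain ⟨φ, -, hm, hn⟩ := hns.exists_strictMono_subseq_fst_snd
  obtain ⟨k, -, ν, _, hdiag, hlim⟩ := H _ _ hm hn
  refine ⟨φ ∘ k, tendsto_measure_preimage_of_tendsto_integral
    (fun p => ((hZ _).prodMk (hZ _)).aemeasurable) hlim
    (isClosed_le continuous_const continuous_dist) ?_⟩
  have hoffdiag := (prob_compl_eq_zero_iff
    (isClosed_eq continuous_fst continuous_snd).measurableSet).2 hdiag
  refine measure_mono_null ?_ hoffdiag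
  rintro q (hq : ε ≤ dist q.1 q.2) (hq' : q.1 = q.2)
  rw [hq', dist_self] at hq
  exact hε.not_ge hq

theorem CauchyInMeasure.exists_strictMono_measure_lt [PseudoMetricSpace E]
    (h : CauchyInMeasure P Z) :
    ∃ φ : ℕ → ℕ, StrictMono φ ∧
      ∀ p, P {ω | 2⁻¹ ^ p ≤ dist (Z (φ p) ω) (Z (φ (p + 1)) ω)} < 2⁻¹ ^ p := by
  have hN : ∀ p : ℕ, ∃ N, ∀ a ≥ N, ∀ b ≥ N,
      P {ω | 2⁻¹ ^ p ≤ dist (Z a ω) (Z b ω)} < 2⁻¹ ^ p := fun p => by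
    have := (h (2⁻¹ ^ p) (by positivity)).eventually
      (gt_mem_nhds (ENNReal.pow_pos (by norm_num : (0 : ℝ≥0∞) < 2⁻¹) p))
    rwa [prod_atTop_atTop_eq, eventually_atTop_prod_self'] at this
  choose N hN using hN
  obtain ⟨φ, hφ, hNφ⟩ := extraction_forall_of_eventually' (P := fun p k => N p ≤ k)
    fun p => ⟨N p, fun _ => id⟩
  exact ⟨φ, hφ, fun p => hN p _ (hNφ p) _ ((hNφ p).trans (hφ p.lt_succ_self).le)⟩

theorem CauchyInMeasure.exists_subseq_ae_exists_tendsto [PseudoMetricSpace E] [CompleteSpace E]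
    (h : CauchyInMeasure P Z) :
    ∃ φ : ℕ → ℕ, StrictMono φ ∧ ∀ᵐ ω ∂P, ∃ x, Tendsto (fun p => Z (φ p) ω) atTop (𝓝 x) := by
  obtain ⟨φ, hφ, hsmall⟩ := h.exists_strictMono_measure_lt
  have hsum : ∑' p, P {ω | 2⁻¹ ^ p ≤ dist (Z (φ p) ω) (Z (φ (p + 1)) ω)} ≠ ∞ := by
    refine ne_top_of_le_ne_top ?_ (ENNReal.tsum_le_tsum fun p => (hsmall p).le)
    simp [ENNReal.tsum_geometric, ENNReal.one_sub_inv_two]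
  refine ⟨φ, hφ, ?_⟩
  filter_upwards [ae_eventually_notMem hsum] with ω hω
  exact cauchySeq_tendsto_of_complete <| cauchySeq_of_eventually_dist_lt_two_inv_pow <|
    hω.mono fun p hp => not_le.1 hp

theorem exists_measurable_limit_of_ae_exists_tendsto [TopologicalSpace E] [PolishSpace E]
    [MeasurableSpace E] [BorelSpace E] [NeZero P] {Y : ℕ → Ω → E} (hY : ∀ n, Measurable (Y n))
    (h : ∀ᵐ ω ∂P, ∃ x, Tendsto (fun n => Y n ω) atTop (𝓝 x)) :
    ∃ X : Ω → E, Measurable X ∧ ∀ᵐ ω ∂P, Tendsto (fun n => Y n ω) atTop (𝓝 (X ω)) := by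
  obtain ⟨-, x, -⟩ := h.exists
  have : Nonempty E := ⟨x⟩
  exact ⟨fun ω => limUnder atTop fun n => Y n ω,
    (StronglyMeasurable.limUnder fun n => (hY n).stronglyMeasurable).measurable,
    h.mono fun _ => tendsto_nhds_limUnder⟩

theorem HasDiagonalSubseqLimits.exists_subseq_tendsto_ae [TopologicalSpace E] [PolishSpace E]
    [MeasurableSpace E] [BorelSpace E] [IsProbabilityMeasure P] (hZ : ∀ n, Measurable (Z n))
    (H : HasDiagonalSubseqLimits P Z) :
    ∃ φ : ℕ → ℕ, StrictMono φ ∧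
      ∃ X : Ω → E, Measurable X ∧ ∀ᵐ ω ∂P, Tendsto (fun p => Z (φ p) ω) atTop (𝓝 (X ω)) := by
  let := TopologicalSpace.upgradeIsCompletelyMetrizable E
  obtain ⟨φ, hφ, h⟩ := (H.cauchyInMeasure hZ).exists_subseq_ae_exists_tendsto
  exact ⟨φ, hφ, exists_measurable_limit_of_ae_exists_tendsto (fun p => hZ (φ p)) h⟩

theorem CauchyInMeasure.tendstoInMeasure_of_subseq [PseudoMetricSpace E]
    (h : CauchyInMeasure P Z) {φ : ℕ → ℕ} (hφ : StrictMono φ) {X : Ω → E}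
    (hX : TendstoInMeasure P (fun p => Z (φ p)) atTop X) : TendstoInMeasure P Z atTop X := by
  refine tendstoInMeasure_iff_dist.2 fun ε hε => ?_
  have h₁ := (h (ε / 2) (half_pos hε)).comp (tendsto_id.prodMap hφ.tendsto_atTop)
  have h₂ := (tendstoInMeasure_iff_dist.1 hX (ε / 2) (half_pos hε)).comp
    (tendsto_snd (f := (atTop : Filter ℕ)))
  have hprod : Tendsto ((fun n => P {ω | ε ≤ dist (Z n ω) (X ω)}) ∘ (Prod.fst : ℕ × ℕ → ℕ))
      (atTop ×ˢ atTop) (𝓝 0) := by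
    refine tendsto_of_tendsto_of_tendsto_of_le_of_le tendsto_const_nhds
      (by simpa using h₁.add h₂) (fun _ => bot_le) fun q => ?_
    refine (measure_mono fun ω (hω : ε ≤ _) => ?_).trans (measure_union_le _ _)
    rcases le_or_gt (ε / 2) (dist (Z q.1 ω) (Z (φ q.2) ω)) with h | h
    · exact Or.inl h
    · exact Or.inr (by linarith [dist_triangle (Z q.1 ω) (Z (φ q.2) ω) (X ω)] : ε / 2 ≤ _)
  rwa [Tendsto, ← map_map, map_fst_prod] at hprod

end MeasureTheory

theorem gyongy_krylov
    {Ω : Type*} [MeasurableSpace Ω] (P : MeasureTheory.Measure Ω)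
    [MeasureTheory.IsProbabilityMeasure P]
    {E : Type*} [MetricSpace E] [PolishSpace E] [MeasurableSpace E] [BorelSpace E]
    (Z : ℕ → Ω → E) (hZ : ∀ n, Measurable (Z n)) :
    (∃ Zlim : Ω → E, Measurable Zlim ∧
        MeasureTheory.TendstoInMeasure P Z Filter.atTop Zlim) ↔
      (∀ m n : ℕ → ℕ, StrictMono m → StrictMono n →
        ∃ k : ℕ → ℕ, StrictMono k ∧
          ∃ ν : MeasureTheory.Measure (E × E), MeasureTheory.IsProbabilityMeasure ν ∧
            ν {p : E × E | p.1 = p.2} = 1 ∧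
            ∀ g : BoundedContinuousFunction (E × E) ℝ,
              Filter.Tendsto
                (fun p => ∫ ω, g (Z (m (k p)) ω, Z (n (k p)) ω) ∂P)
                Filter.atTop (𝓝 (∫ x, g x ∂ν))) := by
  constructor
  · rintro ⟨X, -, hX⟩
    exact hasDiagonalSubseqLimits_of_tendstoInMeasure hZ hX
  · rintro (H : HasDiagonalSubseqLimits P Z)
    obtain ⟨φ, hφ, X, hX, hae⟩ := H.exists_subseq_tendsto_ae hZ
    exact ⟨X, hX, (H.cauchyInMeasure hZ).tendstoInMeasure_of_subseq hφ
      (tendstoInMeasure_of_tendsto_ae (fun p => (hZ _).aestronglyMeasurable) hae)⟩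
end
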